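/- Let s be a natural number and let (A,+,∘) be a left brace such that A^s = 0, where A^1 = A and A^{i+1} is the additive subgroup of (A,+) generated by all elements x*y with x ∈ A and y ∈ A^i. Let a, b ∈ A and define inductively d_0 = a, d_0′ = b, d_{i+1} = d_i + d_i′ and d_{i+1}′ = d_i * d_i′. Then for every c ∈ A: (a+b)*c = a*c + b*c + Σ_{i=0}^{2s} (−1)^{i+1}·((d_i*d_i′)*c − d_i*(d_i′*c)). -/
import Mathlib


universe u

/-- A left brace: `(A,+)` abelian group, `(A,∘)` a group, with
`a∘(b+c)+a = a∘b+a∘c`. -/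
structure LeftBrace (A : Type u) [AddCommGroup A] where
  circ : A → A → A
  one : A
  inv : A → A
  circ_assoc : ∀ a b c : A, circ (circ a b) c = circ a (circ b c)
  one_circ : ∀ a : A, circ one a = a
  circ_one : ∀ a : A, circ a one = a
  inv_circ : ∀ a : A, circ (inv a) a = one
  circ_add : ∀ a b c : A, circ a (b + c) + a = circ a b + circ a c

/-- `a*b = a∘b - a - b`. -/
def LeftBrace.star {A : Type u} [AddCommGroup A] (B : LeftBrace A) (a b : A) : A :=
  B.circ a b - a - b

/-- `ann(k) = {a : k•a = 0}`, as an additive subgroup. -/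
def annSub (A : Type u) [AddCommGroup A] (k : ℕ) : AddSubgroup A where
  carrier := {a : A | k • a = 0}
  zero_mem' := by simp
  add_mem' := by
    intro a b ha hb
    have ha' : k • a = 0 := ha
    have hb' : k • b = 0 := hb
    show k • (a + b) = 0
    rw [smul_add, ha', hb', add_zero]
  neg_mem' := by
    intro a ha
    have ha' : k • a = 0 := ha
    show k • (-a) = 0
    rw [smul_neg, ha', neg_zero]

/-- The coset `[a]` of `a` in `A/ann(k)`. -/
def qmk {A : Type u} [AddCommGroup A] (k : ℕ) (a : A) : A ⧸ annSub A k :=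
  QuotientAddGroup.mk a

/-- Evaluation of a non-associative word under a binary operation `op`,
substituting `f i` for the variable `i`. -/
def wEval {α : Type*} {β : Type*} (op : β → β → β) (f : α → β) : FreeMagma α → β
  | FreeMagma.of a => f a
  | FreeMagma.mul x y => op (wEval op f x) (wEval op f y)

/-- The list of leaves (occurrences of variables, left to right) of a word. -/
def wLeaves {α : Type*} : FreeMagma α → List α
  | FreeMagma.of a => [a]
  | FreeMagma.mul x y => wLeaves x ++ wLeaves y

/-- The last (rightmost) variable of a word. -/
def wLast {α : Type*} : FreeMagma α → α
  | FreeMagma.of a => a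
  | FreeMagma.mul _ y => wLast y

/-- The number of occurrences of the variable `a` in a word. -/
def wCount {α : Type*} [DecidableEq α] (a : α) : FreeMagma α → ℕ
  | FreeMagma.of b => if b = a then 1 else 0
  | FreeMagma.mul x y => wCount a x + wCount a y

/-- The length (number of variable occurrences) of a word. -/
def wLen {α : Type*} : FreeMagma α → ℕ
  | FreeMagma.of _ => 1
  | FreeMagma.mul x y => wLen x + wLen y

/-- Left-normed product `a₁·(a₂·(⋯(aₘ·b)⋯))`. -/
def leftProd {Q : Type*} (mul : Q → Q → Q) : List Q → Q → Q
  | [], b => b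
  | a :: l, b => mul a (leftProd mul l b)

/-- `circPow B a k` is the product of `k` copies of `a` under `∘`. -/
def circPow {A : Type u} [AddCommGroup A] (B : LeftBrace A) (a : A) : ℕ → A
  | 0 => B.one
  | k + 1 => B.circ a (circPow B a k)

/-- `eSeq B a (i-1)` is `a_i`, where `a_1 = a` and `a_{i+1} = a * a_i`. -/
def eSeq {A : Type u} [AddCommGroup A] (B : LeftBrace A) (a : A) : ℕ → A
  | 0 => a
  | i + 1 => B.star a (eSeq B a i)

/-- `starIter B a b (i-1)` is `e_i`, where `e_1 = a*b` and `e_{i+1} = a*e_i`. -/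
def starIter {A : Type u} [AddCommGroup A] (B : LeftBrace A) (a b : A) : ℕ → A
  | 0 => B.star a b
  | i + 1 => B.star a (starIter B a b i)

/-- `iterOp op u v i` is `u ⊙ (u ⊙ (⋯ (u ⊙ v)))` with `i` applications of `u ⊙ ·`. -/
def iterOp {Q : Type*} (op : Q → Q → Q) (u v : Q) : ℕ → Q
  | 0 => v
  | i + 1 => op u (iterOp op u v i)

/-- `f(a) = Σ_{i=1}^{p−1} (C(p−1,i−1)/i)·e_i` where `e_1 = a`, `e_{i+1} = a*e_i`. -/
def fMap {A : Type u} [AddCommGroup A] (B : LeftBrace A) (p : ℕ) (a : A) : A :=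
  ∑ i ∈ Finset.Icc 1 (p - 1), (Nat.choose (p - 1) (i - 1) / i) • eSeq B a (i - 1)

/-- `braceChainAux B (i-1)` is `A^i`: `A^1 = A`, `A^{i+1}` the additive subgroup
generated by `{x*y : x ∈ A, y ∈ A^i}`. -/
def braceChainAux {A : Type u} [AddCommGroup A] (B : LeftBrace A) : ℕ → AddSubgroup A
  | 0 => ⊤
  | i + 1 => AddSubgroup.closure {z : A | ∃ x : A, ∃ y ∈ braceChainAux B i, z = B.star x y}

/-- `dSeq B a b i = (d_i, d_i')`: `d_0 = a`, `d_0' = b`, `d_{i+1} = d_i + d_i'`,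
`d_{i+1}' = d_i * d_i'`. -/
def dSeq {A : Type u} [AddCommGroup A] (B : LeftBrace A) (a b : A) : ℕ → A × A
  | 0 => (a, b)
  | i + 1 => ((dSeq B a b i).1 + (dSeq B a b i).2, B.star (dSeq B a b i).1 (dSeq B a b i).2)

section Aux

variable {A : Type u} [AddCommGroup A] (B : LeftBrace A)

lemma LB.circ_zero (a : A) : B.circ a 0 = a := by
  have h := B.circ_add a 0 0
  rw [add_zero] at h
  exact (add_left_cancel h).symm

lemma LB.circ_neg (a x : A) : B.circ a (-x) = a + a - B.circ a x := by
  have h := B.circ_add a x (-x)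
  rw [add_neg_cancel, LB.circ_zero] at h
  rw [eq_sub_iff_add_eq, add_comm]
  exact h.symm

lemma LB.circ_sub (a x y : A) : B.circ a (x - y) = B.circ a x - B.circ a y + a := by
  have h := B.circ_add a x (-y)
  rw [LB.circ_neg, ← sub_eq_add_neg] at h
  have h2 : B.circ a (x - y) + a = B.circ a x - B.circ a y + a + a := by
    rw [h]; abel
  exact add_right_cancel h2

lemma LB.star_circ (a b c : A) :
    B.star (B.circ a b) c = B.star a (B.star b c) + B.star a c + B.star b c := by
  unfold LeftBrace.star
  rw [B.circ_assoc, LB.circ_sub, LB.circ_sub]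
  abel

lemma LB.one_eq_zero : B.one = 0 := by
  have h := B.circ_add B.one B.one B.one
  rw [B.one_circ, B.one_circ] at h
  have h' : B.one + (B.one + B.one) = 0 + (B.one + B.one) := by
    calc B.one + (B.one + B.one) = B.one + B.one + B.one := by abel
      _ = B.one + B.one := h
      _ = 0 + (B.one + B.one) := by rw [zero_add]
  exact add_right_cancel h'

lemma LB.star_zero_left (c : A) : B.star 0 c = 0 := by
  unfold LeftBrace.star
  rw [← LB.one_eq_zero B, B.one_circ, LB.one_eq_zero B]
  abel

lemma LB.dsum (a b : A) (i : ℕ) :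
    (dSeq B a b (i+1)).1 + (dSeq B a b (i+1)).2
      = B.circ (dSeq B a b i).1 (dSeq B a b i).2 := by
  show ((dSeq B a b i).1 + (dSeq B a b i).2) + B.star (dSeq B a b i).1 (dSeq B a b i).2 = _
  unfold LeftBrace.star
  abel

lemma LB.chain_antitone : ∀ i : ℕ, braceChainAux B (i+1) ≤ braceChainAux B i := by
  intro i
  induction i with
  | zero => exact le_top
  | succ n ih =>
    show AddSubgroup.closure _ ≤ AddSubgroup.closure _
    apply (AddSubgroup.closure_le _).2
    rintro z ⟨x, y, hy, rfl⟩
    exact AddSubgroup.subset_closure ⟨x, y, ih hy, rfl⟩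

lemma LB.chain_le {i j : ℕ} (h : i ≤ j) : braceChainAux B j ≤ braceChainAux B i :=
  antitone_nat_of_succ_le (LB.chain_antitone B) h

lemma LB.d2_mem (a b : A) : ∀ i : ℕ, (dSeq B a b i).2 ∈ braceChainAux B i
  | 0 => AddSubgroup.mem_top _
  | i + 1 => AddSubgroup.subset_closure ⟨_, _, LB.d2_mem a b i, rfl⟩

end Aux

/-- if `A^s = 0` then for all `a,b,c`,
`(a+b)*c = a*c + b*c + Σ_{i=0}^{2s} (−1)^{i+1}·((d_i*d_i')*c − d_i*(d_i'*c))`. -/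
theorem stmt_19 (s : ℕ) (hs : 1 ≤ s)
    (A : Type u) [AddCommGroup A] (B : LeftBrace A)
    (hnil : braceChainAux B (s - 1) = ⊥) (a b : A) :
    ∀ c : A, B.star (a + b) c =
      B.star a c + B.star b c +
        ∑ i ∈ Finset.range (2 * s + 1), (-1 : ℤ) ^ (i + 1) •
          (B.star (B.star (dSeq B a b i).1 (dSeq B a b i).2) c
            - B.star (dSeq B a b i).1 (B.star (dSeq B a b i).2 c)) := by
  intro c
  set d : ℕ → A × A := dSeq B a b with hd
  -- the "defect" E i and the correction term T i
  set T : ℕ → A := fun i => B.star (B.star (d i).1 (d i).2) c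
      - B.star (d i).1 (B.star (d i).2 c) with hT
  set E : ℕ → A := fun i => B.star ((d i).1 + (d i).2) c
      - B.star (d i).1 c - B.star (d i).2 c with hE
  have hrec : ∀ i, E (i + 1) = -(T i) - E i := by
    intro i
    have h1 : B.star ((d (i+1)).1 + (d (i+1)).2) c
        = B.star (d i).1 (B.star (d i).2 c) + B.star (d i).1 c + B.star (d i).2 c := by
      rw [hd, LB.dsum, LB.star_circ]
    have h2 : (d (i+1)).1 = (d i).1 + (d i).2 := rfl
    have h3 : (d (i+1)).2 = B.star (d i).1 (d i).2 := rfl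
    simp only [hE, hT]
    rw [h1, h2, h3]
    abel
  have hform : ∀ n : ℕ, B.star (a + b) c - B.star a c - B.star b c
      = (∑ i ∈ Finset.range n, (-1 : ℤ) ^ (i + 1) • T i) + (-1 : ℤ) ^ n • E n := by
    intro n
    induction n with
    | zero =>
      simp only [Finset.range_zero, Finset.sum_empty, pow_zero, one_smul, zero_add]
      have h0 : d 0 = (a, b) := rfl
      simp only [hE, h0]
    | succ n ih =>
      rw [Finset.sum_range_succ, ih, hrec n]
      have hsm : (-1 : ℤ) ^ (n + 1) • (-T n - E n)
          = -((-1 : ℤ) ^ (n + 1) • T n) + (-1 : ℤ) ^ n • E n := by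
        have hp : (-1 : ℤ) ^ (n + 1) = -((-1 : ℤ) ^ n) := by ring
        rw [hp]
        module
      rw [hsm]
      abel
  have hzero : (d (2 * s + 1)).2 = 0 := by
    have hm := LB.d2_mem B a b (2 * s + 1)
    have hle : braceChainAux B (2 * s + 1) ≤ braceChainAux B (s - 1) :=
      LB.chain_le B (by omega)
    rw [hnil] at hle
    rw [hd]
    exact AddSubgroup.mem_bot.1 (hle hm)
  have hEz : E (2 * s + 1) = 0 := by
    simp only [hE]
    rw [hzero, add_zero, LB.star_zero_left]
    abel
  have key := hform (2 * s + 1)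
  rw [hEz, smul_zero, add_zero] at key
  have hgoal : ∑ i ∈ Finset.range (2 * s + 1), (-1 : ℤ) ^ (i + 1) •
      (B.star (B.star (dSeq B a b i).1 (dSeq B a b i).2) c
        - B.star (dSeq B a b i).1 (B.star (dSeq B a b i).2 c))
      = ∑ i ∈ Finset.range (2 * s + 1), (-1 : ℤ) ^ (i + 1) • T i := rfl
  rw [hgoal, ← key]
  abel
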